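/- Let n be a positive integer and for each i = 1,…,n let the i-th arc be the interval [i−1, i]. Let m be a positive integer, g_j : ℝ^d × ℝ → ℝ continuous for j = 1,…,m, and q_j : ℝ → ℝ continuous exterior penalty functions (q_j(z) = 0 for z ≤ 0, q_j(z) > 0 for z > 0); define Λ(x,t) := Σ_{j=1}^m q_j(g_j(x,t)). For each i let x_i : ℝ → ℝ^d and t_i : ℝ → ℝ be continuous on [i−1, i] and s_i : ℝ → ℝ be continuous on [i−1, i] with s_i(τ) > 0 on [i−1, i]. Then g_j(x_i(τ), t_i(τ)) ≤ 0 for all j = 1,…,m, all τ ∈ [i−1, i] and all i = 1,…,n, if and only if there exists a family of functions y_i : ℝ → ℝ, i = 1,…,n, each differentiable on [i−1, i] with y_i'(τ) = s_i(τ)·Λ(x_i(τ), t_i(τ)) for all τ ∈ [i−1, i] and satisfying the boundary conditions y_i(i−1) = y_i(i). -/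

import Mathlib

/-!
If the constraints hold, every penalty term vanishes and `y ≡ 0` solves the boundary-value
problems. Conversely, `yᵢ' = sᵢ Λ ≥ 0` makes `yᵢ` monotone on its arc, so `yᵢ(i-1) = yᵢ(i)`
forces `yᵢ` to be constant there. One-sided derivatives on a closed interval are unique, so
`sᵢ Λ` vanishes on the whole closed arc, endpoints included; as `sᵢ > 0` this gives `Λ = 0`,
i.e. every constraint holds.
-/

open Set

def IsExteriorPenalty (q : ℝ → ℝ) : Prop :=
  (∀ z ≤ 0, q z = 0) ∧ ∀ z, 0 < z → 0 < q z

namespace IsExteriorPenalty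

variable {q : ℝ → ℝ}

theorem nonneg (hq : IsExteriorPenalty q) (z : ℝ) : 0 ≤ q z := by
  rcases le_or_gt z 0 with hz | hz
  · exact (hq.1 z hz).ge
  · exact (hq.2 z hz).le

theorem eq_zero_iff (hq : IsExteriorPenalty q) {z : ℝ} : q z = 0 ↔ z ≤ 0 :=
  ⟨fun h => not_lt.1 fun hz => (hq.2 z hz).ne' h, hq.1 z⟩

end IsExteriorPenalty

theorem sum_exteriorPenalty_eq_zero_iff {ι : Type*} [Fintype ι] {q : ι → ℝ → ℝ}
    (hq : ∀ j, IsExteriorPenalty (q j)) (z : ι → ℝ) :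
    ∑ j, q j (z j) = 0 ↔ ∀ j, z j ≤ 0 := by
  rw [Finset.sum_eq_zero_iff_of_nonneg fun j _ => (hq j).nonneg _]
  simp [(hq _).eq_zero_iff]

section DerivNonneg

variable {y f : ℝ → ℝ} {a b : ℝ}

theorem eqOn_const_of_hasDerivWithinAt_nonneg_of_eq
    (hy : ∀ τ ∈ Icc a b, HasDerivWithinAt y (f τ) (Icc a b) τ)
    (hf : ∀ τ ∈ Icc a b, 0 ≤ f τ) (he : y a = y b) :
    EqOn y (fun _ => y a) (Icc a b) := by
  have hmono : MonotoneOn y (Icc a b) :=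
    monotoneOn_of_hasDerivWithinAt_nonneg (convex_Icc a b)
      (fun τ hτ => (hy τ hτ).continuousWithinAt)
      (fun τ hτ => (hy τ (interior_subset hτ)).mono interior_subset)
      (fun τ hτ => hf τ (interior_subset hτ))
  intro τ hτ
  have ha : a ∈ Icc a b := left_mem_Icc.2 (hτ.1.trans hτ.2)
  have hb : b ∈ Icc a b := right_mem_Icc.2 (hτ.1.trans hτ.2)
  exact le_antisymm ((hmono hτ hb hτ.2).trans he.ge) (hmono ha hτ hτ.1)

theorem eq_zero_of_hasDerivWithinAt_nonneg_of_eq (hab : a < b)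
    (hy : ∀ τ ∈ Icc a b, HasDerivWithinAt y (f τ) (Icc a b) τ)
    (hf : ∀ τ ∈ Icc a b, 0 ≤ f τ) (he : y a = y b) :
    ∀ τ ∈ Icc a b, f τ = 0 := fun τ hτ =>
  (uniqueDiffOn_Icc hab τ hτ).eq_deriv _ (hy τ hτ)
    ((hasDerivWithinAt_const τ _ (y a)).congr_of_mem
      (eqOn_const_of_hasDerivWithinAt_nonneg_of_eq hy hf he) hτ)

end DerivNonneg

theorem path_constraints_iff_isoperimetric_multi_arc_general
    (d m n : ℕ)
    (g : Fin m → (Fin d → ℝ) × ℝ → ℝ)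
    (q : Fin m → ℝ → ℝ)
    (hq_zero : ∀ j : Fin m, ∀ z : ℝ, z ≤ 0 → q j z = 0)
    (hq_pos : ∀ j : Fin m, ∀ z : ℝ, 0 < z → 0 < q j z)
    (Λ : (Fin d → ℝ) × ℝ → ℝ)
    (hΛ : ∀ x t, Λ (x, t) = ∑ j : Fin m, q j (g j (x, t)))
    (x : Fin n → ℝ → Fin d → ℝ)
    (t : Fin n → ℝ → ℝ)
    (s : Fin n → ℝ → ℝ)
    (hs_pos : ∀ i : Fin n, ∀ τ ∈ Set.Icc (i : ℝ) ((i : ℝ) + 1), 0 < s i τ) :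
    (∀ i : Fin n, ∀ j : Fin m, ∀ τ ∈ Set.Icc (i : ℝ) ((i : ℝ) + 1),
        g j (x i τ, t i τ) ≤ 0) ↔
    (∃ y : Fin n → ℝ → ℝ, ∀ i : Fin n,
        (∀ τ ∈ Set.Icc (i : ℝ) ((i : ℝ) + 1),
          HasDerivWithinAt (y i) (s i τ * Λ (x i τ, t i τ))
            (Set.Icc (i : ℝ) ((i : ℝ) + 1)) τ) ∧
        y i (i : ℝ) = y i ((i : ℝ) + 1)) := by
  have hq : ∀ j, IsExteriorPenalty (q j) := fun j => ⟨hq_zero j, hq_pos j⟩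
  have hΛ_nonneg : ∀ p, 0 ≤ Λ p := fun p => by
    rw [hΛ]
    exact Finset.sum_nonneg fun j _ => (hq j).nonneg _
  have hΛ_eq_zero : ∀ p, Λ p = 0 ↔ ∀ j, g j p ≤ 0 := fun p => by
    rw [hΛ]
    exact sum_exteriorPenalty_eq_zero_iff hq _
  constructor
  · intro h
    refine ⟨fun _ _ => 0, fun i => ⟨fun τ hτ => ?_, rfl⟩⟩
    rw [(hΛ_eq_zero _).2 fun j => h i j τ hτ, mul_zero]
    exact hasDerivWithinAt_const τ _ 0
  · rintro ⟨y, hy⟩ i j τ hτ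
    have hsΛ : s i τ * Λ (x i τ, t i τ) = 0 :=
      eq_zero_of_hasDerivWithinAt_nonneg_of_eq (lt_add_one (i : ℝ)) (hy i).1
        (fun σ hσ => mul_nonneg (hs_pos i σ hσ).le (hΛ_nonneg _)) (hy i).2 τ hτ
    exact (hΛ_eq_zero _).1 ((mul_eq_zero.1 hsΛ).resolve_left (hs_pos i τ hτ).ne') j

/-- Multi-arc form (the paper's Theorem 1): with arcs `[i-1, i]` for `i = 1,…,n`
(indexed here by `i : Fin n`, the `i`-th arc being `[i, i+1]`), and possibly
discontinuous (impulsive) state across arc boundaries, the path constraints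
`gⱼ(xᵢ(τ), tᵢ(τ)) ≤ 0` hold on every arc iff there exists a family of auxiliary
states `yᵢ` with `yᵢ' = sᵢ·Λ(xᵢ, tᵢ)` on each arc and matching boundary values
`yᵢ(i-1) = yᵢ(i)` on each arc. -/
theorem path_constraints_iff_isoperimetric_multi_arc
    (d m n : ℕ) (hm : 0 < m) (hn : 0 < n)
    (g : Fin m → (Fin d → ℝ) × ℝ → ℝ) (hg_cont : ∀ j, Continuous (g j))
    (q : Fin m → ℝ → ℝ) (hq_cont : ∀ j, Continuous (q j))
    (hq_zero : ∀ j : Fin m, ∀ z : ℝ, z ≤ 0 → q j z = 0)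
    (hq_pos : ∀ j : Fin m, ∀ z : ℝ, 0 < z → 0 < q j z)
    (Λ : (Fin d → ℝ) × ℝ → ℝ)
    (hΛ : ∀ x t, Λ (x, t) = ∑ j : Fin m, q j (g j (x, t)))
    (x : Fin n → ℝ → Fin d → ℝ)
    (hx_cont : ∀ i : Fin n, ContinuousOn (x i) (Set.Icc (i : ℝ) ((i : ℝ) + 1)))
    (t : Fin n → ℝ → ℝ)
    (ht_cont : ∀ i : Fin n, ContinuousOn (t i) (Set.Icc (i : ℝ) ((i : ℝ) + 1)))
    (s : Fin n → ℝ → ℝ)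
    (hs_cont : ∀ i : Fin n, ContinuousOn (s i) (Set.Icc (i : ℝ) ((i : ℝ) + 1)))
    (hs_pos : ∀ i : Fin n, ∀ τ ∈ Set.Icc (i : ℝ) ((i : ℝ) + 1), 0 < s i τ) :
    (∀ i : Fin n, ∀ j : Fin m, ∀ τ ∈ Set.Icc (i : ℝ) ((i : ℝ) + 1),
        g j (x i τ, t i τ) ≤ 0) ↔
    (∃ y : Fin n → ℝ → ℝ, ∀ i : Fin n,
        (∀ τ ∈ Set.Icc (i : ℝ) ((i : ℝ) + 1),
          HasDerivWithinAt (y i) (s i τ * Λ (x i τ, t i τ))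
            (Set.Icc (i : ℝ) ((i : ℝ) + 1)) τ) ∧
        y i (i : ℝ) = y i ((i : ℝ) + 1)) :=
  path_constraints_iff_isoperimetric_multi_arc_general d m n g q hq_zero hq_pos Λ hΛ x t s hs_pos
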